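/- Assume μ_1 < 0 < μ_n (a mixed case). Then g(β) < 0 for all β < μ_1, so f is defined on (−∞, μ_1) and f(β) > −1 there; moreover f(β) → −1 + 2/(n−1) as β → −∞, f(β) → −1 as β → μ_1 from the left, and f is bounded above on (−∞, μ_1). In particular, for every real λ ≤ −1 the equation f(β) = λ has no solution in (−∞, μ_1), and only λ in a bounded subinterval above −1 can be values of f. -/

import Mathlib

/-!
Write `g β = 1 + ∑ j, β / (μ j - β)`. For `β < μ₁ < 0` every summand is negative, the
`j = 1` summand is at most `-1` and the `j = n` summand is at most `μ₁ / (μₙ - μ₁)`, so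
`g ≤ μ₁ / (μₙ - μ₁) < 0` uniformly on `(-∞, μ₁)`; this pins `f = -1 - 2 / g` between `-1` and
`-1 - 2 (μₙ - μ₁) / μ₁`. Each summand tends to `-1` as `β → -∞`, so `g → 1 - n`, while the
`j = 1` summand alone drives `g` to `-∞` as `β → μ₁⁻`, so `f → -1`.
-/

open Set Finset Filter
open Topology

/-- The function `g` of the statement. -/
noncomputable def secular {ι : Type*} [Fintype ι] (μ : ι → ℝ) (β : ℝ) : ℝ :=
  1 + β * ∑ j, 1 / (μ j - β)

section
variable {ι : Type*} [Fintype ι] (μ : ι → ℝ)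

lemma secular_eq_one_add_sum (β : ℝ) : secular μ β = 1 + ∑ j, β / (μ j - β) := by
  simp only [secular, Finset.mul_sum, mul_one_div]

lemma div_sub_nonpos_of_neg_of_lt {a β : ℝ} (hβ : β < 0) (ha : β < a) : β / (a - β) ≤ 0 :=
  div_nonpos_of_nonpos_of_nonneg hβ.le (sub_pos.2 ha).le

lemma secular_le_of_lt_min {i₀ i₁ : ι} (hi : i₁ ≠ i₀) (hmin : ∀ j, μ i₀ ≤ μ j)
    (h₀ : μ i₀ < 0) (h₁ : 0 < μ i₁) {β : ℝ} (hβ : β < μ i₀) :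
    secular μ β ≤ μ i₀ / (μ i₁ - μ i₀) := by
  classical
  have hterm₀ : β / (μ i₀ - β) ≤ -1 := by
    rw [div_le_iff₀ (sub_pos.2 hβ)]; linarith
  have hterm₁ : β / (μ i₁ - β) ≤ μ i₀ / (μ i₁ - μ i₀) := by
    rw [div_le_div_iff₀ (by linarith) (by linarith)]
    nlinarith
  have hsum : ∑ j, β / (μ j - β) ≤ ∑ j ∈ {i₀, i₁}, β / (μ j - β) :=
    Finset.sum_le_sum_of_subset_of_nonpos' (subset_univ _)
      fun j _ _ => div_sub_nonpos_of_neg_of_lt (hβ.trans h₀) (hβ.trans_le (hmin j))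
  rw [Finset.sum_pair hi.symm] at hsum
  rw [secular_eq_one_add_sum]
  linarith

lemma tendsto_div_sub_atBot (a : ℝ) :
    Tendsto (fun β : ℝ => β / (a - β)) atBot (𝓝 (-1)) := by
  have hden : Tendsto (fun β : ℝ => a - β) atBot atTop :=
    tendsto_atTop_add_const_left _ a tendsto_neg_atBot_atTop
  have := (tendsto_const_nhds (x := a)).div_atTop hden |>.sub_const 1
  rw [zero_sub] at this
  refine this.congr' ?_
  filter_upwards [eventually_lt_atBot a] with β hβ
  rw [div_sub_one (sub_pos.2 hβ).ne']
  ring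

lemma tendsto_secular_atBot :
    Tendsto (secular μ) atBot (𝓝 (1 - Fintype.card ι)) := by
  have := (tendsto_finsetSum univ fun j _ => tendsto_div_sub_atBot (μ j)).const_add 1
  simp only [sum_const, card_univ, nsmul_eq_mul, mul_neg, mul_one, ← sub_eq_add_neg] at this
  rwa [show secular μ = _ from funext (secular_eq_one_add_sum μ)]

lemma tendsto_inv_sub_nhdsLT (a : ℝ) :
    Tendsto (fun β : ℝ => (a - β)⁻¹) (𝓝[<] a) atTop := by
  refine Tendsto.inv_tendsto_nhdsGT_zero (tendsto_nhdsWithin_iff.2 ⟨?_, ?_⟩)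
  · exact ((continuous_const.sub continuous_id).tendsto' a 0 (sub_self a)).mono_left
      nhdsWithin_le_nhds
  · filter_upwards [self_mem_nhdsWithin] with β hβ using sub_pos.2 (mem_Iio.1 hβ)

lemma tendsto_secular_nhdsLT {i₀ : ι} (hmin : ∀ j, μ i₀ ≤ μ j) (h₀ : μ i₀ < 0) :
    Tendsto (secular μ) (𝓝[<] μ i₀) atBot := by
  classical
  have hterm : Tendsto (fun β => 1 + β * (μ i₀ - β)⁻¹) (𝓝[<] μ i₀) atBot :=
    tendsto_atBot_add_const_left _ 1 <|
      (tendsto_nhdsWithin_of_tendsto_nhds tendsto_id).neg_mul_atTop h₀ (tendsto_inv_sub_nhdsLT _)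
  refine tendsto_atBot_mono' _ ?_ hterm
  filter_upwards [self_mem_nhdsWithin] with β (hβ : β < μ i₀)
  rw [secular_eq_one_add_sum, ← Finset.add_sum_erase _ _ (mem_univ i₀), ← div_eq_mul_inv]
  have := Finset.sum_nonpos fun j (_ : j ∈ univ.erase i₀) =>
    div_sub_nonpos_of_neg_of_lt (hβ.trans h₀) (hβ.trans_le (hmin j))
  linarith
end

/-- Mixed case `μ₁ < 0 < μₙ`: `g < 0` on `(-∞, μ₁)`, `f > -1` there,
`f(β) → -1 + 2/(n-1)` as `β → -∞`, `f(β) → -1` as `β → μ₁⁻`, `f` is bounded above on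
`(-∞, μ₁)`, and for `λ ≤ -1` the equation `f(β) = λ` has no solution in `(-∞, μ₁)`. -/
theorem mixed_f_range (n : ℕ) (hn : 2 ≤ n) (μ : Fin n → ℝ) (hμ : Monotone μ)
    (g : ℝ → ℝ)
    (hg : ∀ β : ℝ, (∀ j, β ≠ μ j) → g β = 1 + β * ∑ j, 1 / (μ j - β))
    (f : ℝ → ℝ)
    (hf : ∀ β : ℝ, g β ≠ 0 → f β = -1 - 2 / g β)
    (hμ1 : μ ⟨0, by omega⟩ < 0) (hμn : 0 < μ ⟨n - 1, by omega⟩) :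
    (∀ β : ℝ, β < μ ⟨0, by omega⟩ → g β < 0) ∧
    (∀ β : ℝ, β < μ ⟨0, by omega⟩ → -1 < f β) ∧
    Tendsto f atBot (nhds (-1 + 2 / ((n : ℝ) - 1))) ∧
    Tendsto f (nhdsWithin (μ ⟨0, by omega⟩) (Iio (μ ⟨0, by omega⟩))) (nhds (-1)) ∧
    BddAbove (f '' Iio (μ ⟨0, by omega⟩)) ∧
    (∀ lam : ℝ, lam ≤ -1 → ¬∃ β : ℝ, β < μ ⟨0, by omega⟩ ∧ f β = lam) := by
  set μ₀ := μ ⟨0, by omega⟩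
  set c := μ₀ / (μ ⟨n - 1, by omega⟩ - μ₀)
  have hmin : ∀ j, μ₀ ≤ μ j := fun j => hμ (Fin.mk_le_mk.2 j.val.zero_le)
  have hg_eq : ∀ β < μ₀, g β = secular μ β := fun β hβ =>
    hg β fun j => (hβ.trans_le (hmin j)).ne
  have hne : (⟨n - 1, by omega⟩ : Fin n) ≠ ⟨0, by omega⟩ :=
    Fin.ne_of_val_ne (show n - 1 ≠ 0 by omega)
  have hg_le : ∀ β < μ₀, g β ≤ c := fun β hβ =>
    hg_eq β hβ ▸ secular_le_of_lt_min μ hne hmin hμ1 hμn hβ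
  have hc : c < 0 := div_neg_of_neg_of_pos hμ1 (by linarith)
  have hg_neg : ∀ β < μ₀, g β < 0 := fun β hβ => (hg_le β hβ).trans_lt hc
  have hf_eq : ∀ l : Filter ℝ, (∀ᶠ β in l, β < μ₀) → (fun β => -1 - 2 / secular μ β) =ᶠ[l] f :=
    fun l hl => hl.mono fun β hβ => by rw [hf β (hg_neg β hβ).ne, hg_eq β hβ]
  have hf_gt : ∀ β < μ₀, -1 < f β := fun β hβ => by
    rw [hf β (hg_neg β hβ).ne]; linarith [div_neg_of_pos_of_neg two_pos (hg_neg β hβ)]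
  refine ⟨hg_neg, hf_gt, ?_, ?_, ⟨-1 - 2 / c, ?_⟩, fun lam hlam ⟨β, hβ, hfβ⟩ => ?_⟩
  · have hn' : (1 : ℝ) - n ≠ 0 := by
      rw [sub_ne_zero]; exact_mod_cast (by omega : 1 ≠ n)
    have hlim := tendsto_secular_atBot μ
    rw [Fintype.card_fin] at hlim
    have : Tendsto (fun β => -1 - 2 / secular μ β) atBot (𝓝 (-1 - 2 / (1 - n))) :=
      tendsto_const_nhds.sub (tendsto_const_nhds.div hlim hn')
    rw [← neg_sub (n : ℝ), div_neg, sub_neg_eq_add] at this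
    exact this.congr' (hf_eq _ (eventually_lt_atBot μ₀))
  · have : Tendsto (fun β => -1 - 2 / secular μ β) (𝓝[<] μ₀) (𝓝 (-1 - 0)) :=
      tendsto_const_nhds.sub (tendsto_const_nhds.div_atBot (tendsto_secular_nhdsLT μ hmin hμ1))
    rw [sub_zero] at this
    exact this.congr' (hf_eq _ self_mem_nhdsWithin)
  · rintro _ ⟨β, hβ, rfl⟩
    have h := one_div_le_one_div_of_neg_of_le hc (hg_le β hβ)
    rw [hf β (hg_neg β hβ).ne, div_eq_mul_one_div 2 (g β), div_eq_mul_one_div 2 c]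
    linarith
  · linarith [hf_gt β hβ]
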